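/- Let k ≥ 2 and r ≥ 1 be integers and let D = D_{2^k(2r+1)} be the presented group ⟨x, y ∣ x^{2^k} = 1, y^{2r+1} = 1, x y x^{-1} = y^{-1}⟩. Then D is a finite group of cardinality 2^k(2r+1), and the set of conjugacy classes of D has cardinality 2^{k-1}(r+2). -/

import Mathlib

/-- The relations of the presented group
`D_{2^k(2r+1)} = ⟨x, y ∣ x^{2^k} = 1, y^{2r+1} = 1, x y x⁻¹ = y⁻¹⟩`,
where `x` is the first generator and `y` the second one. -/
def Drels (k r : ℕ) : Set (FreeGroup (Fin 2)) :=
  {FreeGroup.of 0 ^ (2 ^ k), FreeGroup.of 1 ^ (2 * r + 1),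
   FreeGroup.of 0 * FreeGroup.of 1 * (FreeGroup.of 0)⁻¹ * FreeGroup.of 1}

/-- The presented group `D_{2^k(2r+1)}`. -/
abbrev DGroup (k r : ℕ) : Type := PresentedGroup (Drels k r)

/-- The generator `x` of `D_{2^k(2r+1)}`. -/
noncomputable def Dx (k r : ℕ) : DGroup k r := PresentedGroup.of 0

/-- The generator `y` of `D_{2^k(2r+1)}`. -/
noncomputable def Dy (k r : ℕ) : DGroup k r := PresentedGroup.of 1

namespace DihedralAux



/-- Concrete model: `A a i` is `y^a x^{2i}`, `B a i` is `y^a x^{2i+1}`. -/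
inductive DD (n m : ℕ) : Type
  | A : ZMod n → ZMod m → DD n m
  | B : ZMod n → ZMod m → DD n m

namespace DD

variable {n m : ℕ}

def mul' : DD n m → DD n m → DD n m
  | A a i, A b j => A (a + b) (i + j)
  | A a i, B b j => B (a + b) (i + j)
  | B a i, A b j => B (a - b) (i + j)
  | B a i, B b j => A (a - b) (i + j + 1)

def inv' : DD n m → DD n m
  | A a i => A (-a) (-i)
  | B a i => B a (-i - 1)

instance : Mul (DD n m) := ⟨mul'⟩
instance : One (DD n m) := ⟨A 0 0⟩
instance : Inv (DD n m) := ⟨inv'⟩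

@[simp] lemma A_mul_A (a b : ZMod n) (i j : ZMod m) :
    (A a i : DD n m) * A b j = A (a + b) (i + j) := rfl
@[simp] lemma A_mul_B (a b : ZMod n) (i j : ZMod m) :
    (A a i : DD n m) * B b j = B (a + b) (i + j) := rfl
@[simp] lemma B_mul_A (a b : ZMod n) (i j : ZMod m) :
    (B a i : DD n m) * A b j = B (a - b) (i + j) := rfl
@[simp] lemma B_mul_B (a b : ZMod n) (i j : ZMod m) :
    (B a i : DD n m) * B b j = A (a - b) (i + j + 1) := rfl
@[simp] lemma inv_A (a : ZMod n) (i : ZMod m) : (A a i : DD n m)⁻¹ = A (-a) (-i) := rfl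
@[simp] lemma inv_B (a : ZMod n) (i : ZMod m) : (B a i : DD n m)⁻¹ = B a (-i - 1) := rfl
lemma one_def : (1 : DD n m) = A 0 0 := rfl

instance : Group (DD n m) :=
  Group.ofLeftAxioms
    (by rintro (⟨a,i⟩|⟨a,i⟩) (⟨b,j⟩|⟨b,j⟩) (⟨c,l⟩|⟨c,l⟩) <;>
      simp only [A_mul_A, A_mul_B, B_mul_A, B_mul_B, A.injEq, B.injEq] <;>
      constructor <;> ring)
    (by rintro (⟨a,i⟩|⟨a,i⟩) <;> simp [one_def])
    (by
      rintro (⟨a,i⟩|⟨a,i⟩) <;>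
        simp only [inv_A, inv_B, A_mul_A, B_mul_B, one_def, A.injEq] <;>
        constructor <;> ring)

def toSum : DD n m ≃ (ZMod n × ZMod m) ⊕ (ZMod n × ZMod m) where
  toFun := fun g => match g with
    | A a i => .inl (a, i)
    | B a i => .inr (a, i)
  invFun := fun s => match s with
    | .inl (a, i) => A a i
    | .inr (a, i) => B a i
  left_inv := by rintro (⟨a,i⟩|⟨a,i⟩) <;> rfl
  right_inv := by rintro (⟨a,i⟩|⟨a,i⟩) <;> rfl

instance [NeZero n] [NeZero m] : Finite (DD n m) :=
  Finite.of_equiv _ toSum.symm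

lemma card_DD [NeZero n] [NeZero m] : Nat.card (DD n m) = 2 * (n * m) := by
  rw [Nat.card_congr toSum, Nat.card_sum, Nat.card_prod, Nat.card_zmod, Nat.card_zmod]
  ring

@[simp] lemma A_pow (a : ZMod n) (t : ℕ) : (A a 0 : DD n m) ^ t = A ((t : ZMod n) * a) 0 := by
  induction t with
  | zero => simp [one_def]
  | succ t ih => rw [pow_succ, ih]; simp; push_cast; ring

-- conjugation lemmas
lemma conj_A_A (a b : ZMod n) (i j : ZMod m) :
    (A a i : DD n m) * A b j * (A a i)⁻¹ = A b j := by
  simp only [A_mul_A, inv_A, A.injEq]; constructor <;> ring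
lemma conj_B_A (a b : ZMod n) (i j : ZMod m) :
    (B a i : DD n m) * A b j * (B a i)⁻¹ = A (-b) j := by
  simp only [B_mul_A, inv_B, B_mul_B, A.injEq]; constructor <;> ring
lemma conj_A_B (a b : ZMod n) (i j : ZMod m) :
    (A a i : DD n m) * B b j * (A a i)⁻¹ = B (b + 2 * a) j := by
  simp only [A_mul_B, inv_A, B_mul_A, B.injEq]; constructor <;> ring
lemma conj_B_B (a b : ZMod n) (i j : ZMod m) :
    (B a i : DD n m) * B b j * (B a i)⁻¹ = B (2 * a - b) j := by
  simp only [B_mul_B, inv_B, A_mul_B, B.injEq]; constructor <;> ring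

end DD




open DD

/-- canonical representative of the pair `{b, -b}` in `ZMod (2r+1)` -/
def rep (r : ℕ) (b : ZMod (2 * r + 1)) : ZMod (2 * r + 1) :=
  if b.val ≤ r then b else -b

lemma rep_val_le (r : ℕ) (b : ZMod (2 * r + 1)) : (rep r b).val ≤ r := by
  unfold rep
  split
  · assumption
  · rename_i h
    have hb0 : b ≠ 0 := by
      intro h0; subst h0; simp [ZMod.val_zero] at h
    rw [ZMod.neg_val, if_neg hb0]
    have := ZMod.val_lt b
    omega

lemma rep_neg (r : ℕ) (b : ZMod (2 * r + 1)) : rep r (-b) = rep r b := by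
  by_cases hb0 : b = 0
  · simp [hb0]
  have h1 : (-b).val = 2 * r + 1 - b.val := by rw [ZMod.neg_val, if_neg hb0]
  have hbl := ZMod.val_lt b
  have hb1 : b.val ≠ 0 := fun h => hb0 ((ZMod.val_eq_zero b).mp h)
  unfold rep
  rw [h1]
  by_cases h : b.val ≤ r
  · rw [if_neg (by omega), if_pos h, neg_neg]
  · rw [if_pos (by omega), if_neg h]

variable {m : ℕ} {r : ℕ}

/-- conjugation invariant -/
def θ (r m : ℕ) : DD (2 * r + 1) m → ZMod m ⊕ ({b : ZMod (2 * r + 1) // b.val ≤ r} × ZMod m)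
  | .A b j => .inr (⟨rep r b, rep_val_le r b⟩, j)
  | .B _ j => .inl j

lemma θ_conj (g h : DD (2 * r + 1) m) : θ r m (h * g * h⁻¹) = θ r m g := by
  rcases g with ⟨b, j⟩ | ⟨b, j⟩ <;> rcases h with ⟨a, i⟩ | ⟨a, i⟩ <;>
    simp only [θ, conj_A_A, conj_B_A, conj_A_B, conj_B_B, rep_neg]

lemma two_mul_shift (r : ℕ) (b : ZMod (2 * r + 1)) :
    (2 : ZMod (2 * r + 1)) * (((r : ZMod (2 * r + 1)) + 1) * b) = b := by
  have h1 : ((2 * r + 1 : ℕ) : ZMod (2 * r + 1)) = 0 := ZMod.natCast_self _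
  calc (2 : ZMod (2 * r + 1)) * (((r : ZMod (2 * r + 1)) + 1) * b)
      = ((2 * r + 1 : ℕ) : ZMod (2 * r + 1)) * b + b := by push_cast; ring
    _ = b := by rw [h1, zero_mul, zero_add]

lemma card_conjClasses_DD (r m : ℕ) [NeZero m] :
    Nat.card (ConjClasses (DD (2 * r + 1) m)) = m * (r + 2) := by
  have hmain : ConjClasses (DD (2 * r + 1) m) ≃
      (ZMod m ⊕ ({b : ZMod (2 * r + 1) // b.val ≤ r} × ZMod m)) :=
    { toFun := Quotient.lift (θ r m) (fun g g' hgg' => by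
        obtain ⟨c, hc⟩ := isConj_iff.mp hgg'
        rw [← hc, θ_conj])
      invFun := fun t => ConjClasses.mk (match t with
        | .inl j => DD.B 0 j
        | .inr (b, j) => DD.A b.1 j)
      left_inv := fun c => by
        induction c using Quotient.inductionOn with
        | h g =>
          rcases g with ⟨b, j⟩ | ⟨b, j⟩
          · show ConjClasses.mk (DD.A (rep r b) j) = ConjClasses.mk (DD.A b j)
            refine ConjClasses.mk_eq_mk_iff_isConj.mpr (isConj_iff.mpr ?_)
            unfold rep
            split
            · exact ⟨1, by group⟩
            · exact ⟨DD.B 0 0, by rw [conj_B_A, neg_neg]⟩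
          · show ConjClasses.mk (DD.B 0 j) = ConjClasses.mk (DD.B b j)
            refine ConjClasses.mk_eq_mk_iff_isConj.mpr (isConj_iff.mpr ?_)
            refine ⟨DD.A (((r : ZMod (2*r+1)) + 1) * b) 0, ?_⟩
            rw [conj_A_B, zero_add, two_mul_shift]
      right_inv := fun t => by
        rcases t with j | ⟨⟨b, hb⟩, j⟩
        · rfl
        · show θ r m (DD.A b j) = Sum.inr (⟨b, hb⟩, j)
          simp [θ, rep, hb] }
  rw [Nat.card_congr hmain, Nat.card_sum, Nat.card_prod, Nat.card_zmod]
  have hsub : Nat.card {b : ZMod (2 * r + 1) // b.val ≤ r} = r + 1 := by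
    refine Nat.card_eq_of_equiv_fin
      ⟨fun b => ⟨b.1.val, Nat.lt_succ_of_le b.2⟩,
       fun a => ⟨(a.1 : ZMod (2 * r + 1)), by
         rw [ZMod.val_cast_of_lt (by omega)]; omega⟩,
       fun b => Subtype.ext (ZMod.natCast_rightInverse b.1),
       fun a => Fin.ext (ZMod.val_cast_of_lt
         (show (a : ℕ) < 2 * r + 1 by have := a.isLt; omega))⟩
  rw [hsub]
  ring


lemma exists_pow_eq {G : Type*} [Group G] {g : G} {t : ℕ} (ht : 0 < t) (h : g ^ t = 1)
    (a : ℤ) : ∃ s : ℕ, s < t ∧ g ^ a = g ^ s := by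
  have ht' : (0 : ℤ) < t := by exact_mod_cast ht
  refine ⟨(a % t).toNat, ?_, ?_⟩
  · have h1 := Int.emod_lt_of_pos a ht'
    have h2 := Int.emod_nonneg a ht'.ne'
    omega
  · have h2 := Int.emod_nonneg a ht'.ne'
    conv_lhs => rw [show a = (t : ℤ) * (a / t) + a % t from (Int.mul_ediv_add_emod a t).symm]
    rw [zpow_add, zpow_mul, zpow_natCast, h, one_zpow, one_mul, ← zpow_natCast,
      Int.toNat_of_nonneg h2]





lemma rel_one {k r : ℕ} {w : FreeGroup (Fin 2)} (h : w ∈ Drels k r) :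
    PresentedGroup.mk (Drels k r) w = 1 :=
  (QuotientGroup.eq_one_iff w).mpr (Subgroup.subset_normalClosure h)

lemma Dx_pow (k r : ℕ) : Dx k r ^ (2 ^ k) = 1 := by
  rw [show Dx k r = PresentedGroup.mk (Drels k r) (FreeGroup.of 0) from rfl, ← map_pow]
  exact rel_one (by simp [Drels])

lemma Dy_pow (k r : ℕ) : Dy k r ^ (2 * r + 1) = 1 := by
  rw [show Dy k r = PresentedGroup.mk (Drels k r) (FreeGroup.of 1) from rfl, ← map_pow]
  exact rel_one (by simp [Drels])

lemma Dxy (k r : ℕ) : Dx k r * Dy k r * (Dx k r)⁻¹ = (Dy k r)⁻¹ := by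
  have h1 : Dx k r * Dy k r * (Dx k r)⁻¹ * Dy k r = 1 := by
    have := rel_one (show FreeGroup.of 0 * FreeGroup.of 1 * (FreeGroup.of 0)⁻¹ * FreeGroup.of 1
        ∈ Drels k r by simp [Drels])
    simpa [map_mul, map_inv, Dx, Dy, PresentedGroup.of] using this
  exact eq_inv_of_mul_eq_one_left h1



lemma conj_key (k r : ℕ) (b c : ℤ) :
    Dx k r ^ b * Dy k r ^ c * Dx k r ^ (-b) = Dy k r ^ c ∨
    Dx k r ^ b * Dy k r ^ c * Dx k r ^ (-b) = Dy k r ^ (-c) := by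
  set x := Dx k r with hxdef
  set y := Dy k r with hydef
  have hconj : x * y * x⁻¹ = y⁻¹ := Dxy k r
  have h2 : x * y⁻¹ * x⁻¹ = y := by
    rw [show x * y⁻¹ * x⁻¹ = (x * y * x⁻¹)⁻¹ by group, hconj, inv_inv]
  have h4 : x⁻¹ * y⁻¹ * x = y := by rw [← hconj]; group
  have h3 : x⁻¹ * y * x = y⁻¹ := by
    rw [show x⁻¹ * y * x = (x⁻¹ * y⁻¹ * x)⁻¹ by group, h4]
  have base : ∀ b : ℤ, x ^ b * y * x ^ (-b) = y ∨ x ^ b * y * x ^ (-b) = y⁻¹ := by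
    intro b
    induction b using Int.induction_on with
    | zero => left; simp
    | succ b ih =>
      have e : x ^ ((b : ℤ) + 1) * y * x ^ (-((b : ℤ) + 1)) =
          x * (x ^ (b : ℤ) * y * x ^ (-(b : ℤ))) * x⁻¹ := by group
      rcases ih with h | h
      · right; rw [e, h, hconj]
      · left; rw [e, h, h2]
    | pred b ih =>
      have e : x ^ (-(b : ℤ) - 1) * y * x ^ (-(-(b : ℤ) - 1)) =
          x⁻¹ * (x ^ (-(b : ℤ)) * y * x ^ (-(-(b : ℤ)))) * x := by group
      rcases ih with h | h
      · right; rw [e, h, h3]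
      · left; rw [e, h, h4]
  rcases base b with h | h
  · left
    have h' : x ^ b * y * (x ^ b)⁻¹ = y := by rw [← zpow_neg]; exact h
    calc x ^ b * y ^ c * x ^ (-b) = (x ^ b * y * (x ^ b)⁻¹) ^ c := by rw [zpow_neg, conj_zpow]
      _ = y ^ c := by rw [h']
  · right
    have h' : x ^ b * y * (x ^ b)⁻¹ = y⁻¹ := by rw [← zpow_neg]; exact h
    calc x ^ b * y ^ c * x ^ (-b) = (x ^ b * y * (x ^ b)⁻¹) ^ c := by rw [zpow_neg, conj_zpow]
      _ = (y⁻¹) ^ c := by rw [h']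
      _ = y ^ (-c) := by rw [inv_zpow, zpow_neg]

lemma span (k r : ℕ) (g : DGroup k r) : ∃ a b : ℤ, g = Dy k r ^ a * Dx k r ^ b := by
  set x := Dx k r with hxdef
  set y := Dy k r with hydef
  let S : Subgroup (DGroup k r) :=
    { carrier := {g | ∃ a b : ℤ, g = y ^ a * x ^ b}
      one_mem' := ⟨0, 0, by simp⟩
      mul_mem' := by
        rintro g h ⟨a, b, rfl⟩ ⟨c, d, rfl⟩
        rcases conj_key k r b c with hh | hh
        · exact ⟨a + c, b + d, by
            rw [show y ^ a * x ^ b * (y ^ c * x ^ d) =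
              y ^ a * (x ^ b * y ^ c * x ^ (-b)) * x ^ (b + d) from by group, hh, ← zpow_add]⟩
        · exact ⟨a + -c, b + d, by
            rw [show y ^ a * x ^ b * (y ^ c * x ^ d) =
              y ^ a * (x ^ b * y ^ c * x ^ (-b)) * x ^ (b + d) from by group, hh, ← zpow_add]⟩
      inv_mem' := by
        rintro g ⟨a, b, rfl⟩
        rcases conj_key k r (-b) (-a) with hh | hh
        · exact ⟨-a, -b, by
            rw [show (y ^ a * x ^ b)⁻¹ =
              (x ^ (-b) * y ^ (-a) * x ^ (-(-b))) * x ^ (-b) from by group, hh]⟩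
        · exact ⟨-(-a), -b, by
            rw [show (y ^ a * x ^ b)⁻¹ =
              (x ^ (-b) * y ^ (-a) * x ^ (-(-b))) * x ^ (-b) from by group, hh]⟩ }
  exact PresentedGroup.generated_by _ S
    (by
      intro j
      fin_cases j
      · exact ⟨0, 1, by simp; rfl⟩
      · exact ⟨1, 0, by simp; rfl⟩) g



lemma A0_pow {n m : ℕ} (i : ZMod m) (t : ℕ) :
    (DD.A 0 i : DD n m) ^ t = DD.A 0 ((t : ZMod m) * i) := by
  induction t with
  | zero => simp [DD.one_def]
  | succ t ih => rw [pow_succ, ih]; simp; push_cast; ring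



end DihedralAux

open DihedralAux in
/-- For `k ≥ 2` and `r ≥ 1`, the presented group `D_{2^k(2r+1)}` is a finite group of
cardinality `2^k(2r+1)`, and its set of conjugacy classes has cardinality `2^{k-1}(r+2)`. -/
theorem card_and_conjClasses_DGroup (k r : ℕ) (hk : 2 ≤ k) (hr : 1 ≤ r) :
    Finite (DGroup k r) ∧
    Nat.card (DGroup k r) = 2 ^ k * (2 * r + 1) ∧
    Nat.card (ConjClasses (DGroup k r)) = 2 ^ (k - 1) * (r + 2) := by
  classical
  haveI : NeZero (2 ^ (k - 1)) := ⟨(by positivity : 0 < 2 ^ (k - 1)).ne'⟩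
  haveI : NeZero (2 ^ k) := ⟨(by positivity : 0 < 2 ^ k).ne'⟩
  have hk1 : k - 1 + 1 = k := by omega
  have h2k : 2 ^ k = 2 * 2 ^ (k - 1) := by rw [← pow_succ', hk1]
  set x := Dx k r with hxdef
  set y := Dy k r with hydef
  let f : Fin 2 → DD (2 * r + 1) (2 ^ (k - 1)) := ![DD.B 0 0, DD.A 1 0]
  have hf0 : f 0 = DD.B 0 0 := rfl
  have hf1 : f 1 = DD.A 1 0 := rfl
  have hB2 : (DD.B 0 0 : DD (2 * r + 1) (2 ^ (k - 1))) ^ 2 = DD.A 0 1 := by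
    rw [pow_two]; simp
  have hf : ∀ w ∈ Drels k r, FreeGroup.lift f w = 1 := by
    intro w hw
    have hw' : w = FreeGroup.of 0 ^ 2 ^ k ∨ w = FreeGroup.of 1 ^ (2 * r + 1) ∨
        w = FreeGroup.of 0 * FreeGroup.of 1 * (FreeGroup.of 0)⁻¹ * FreeGroup.of 1 := by
      simpa [Drels, Set.mem_insert_iff] using hw
    rcases hw' with rfl | rfl | rfl
    · rw [map_pow, FreeGroup.lift_apply_of, hf0, h2k, pow_mul, hB2, A0_pow]
      simp [DD.one_def, ZMod.natCast_self]
    · rw [map_pow, FreeGroup.lift_apply_of, hf1, DD.A_pow]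
      simp [DD.one_def, ZMod.natCast_self]
    · rw [map_mul, map_mul, map_mul, map_inv, FreeGroup.lift_apply_of, FreeGroup.lift_apply_of, hf0, hf1]
      simp [DD.one_def]
  let φ : DGroup k r →* DD (2 * r + 1) (2 ^ (k - 1)) := PresentedGroup.toGroup hf
  have hφx : φ x = DD.B 0 0 := by
    rw [hxdef, show Dx k r = PresentedGroup.of 0 from rfl, PresentedGroup.toGroup.of]
    exact hf0
  have hφy : φ y = DD.A 1 0 := by
    rw [hydef, show Dy k r = PresentedGroup.of 1 from rfl, PresentedGroup.toGroup.of]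
    exact hf1
  have hφA : ∀ (a : ZMod (2 * r + 1)) (i : ZMod (2 ^ (k - 1))),
      φ (y ^ a.val * x ^ (2 * i.val)) = DD.A a i := by
    intro a i
    rw [map_mul, map_pow, map_pow, hφx, hφy, pow_mul, hB2, DD.A_pow, A0_pow]
    simp [ZMod.natCast_rightInverse a, ZMod.natCast_rightInverse i]
  have hφsurj : Function.Surjective φ := by
    rintro (⟨a, i⟩ | ⟨a, i⟩)
    · exact ⟨_, hφA a i⟩
    · refine ⟨y ^ a.val * x ^ (2 * i.val) * x, ?_⟩
      rw [map_mul, hφA, hφx]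
      simp
  have hy2r := Dy_pow k r
  have hx2k := Dx_pow k r
  let fP : ZMod (2 * r + 1) × ZMod (2 ^ k) → DGroup k r :=
    fun p => y ^ p.1.val * x ^ p.2.val
  have hfPsurj : Function.Surjective fP := by
    intro g
    obtain ⟨a, b, rfl⟩ := span k r g
    obtain ⟨s, hs, hys⟩ := exists_pow_eq (by omega) hy2r a
    obtain ⟨u, hu, hxu⟩ := exists_pow_eq (by positivity) hx2k b
    refine ⟨((s : ZMod (2 * r + 1)), (u : ZMod (2 ^ k))), ?_⟩
    simp only [fP]
    rw [ZMod.val_cast_of_lt (by omega), ZMod.val_cast_of_lt hu, ← hys, ← hxu]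
  haveI hfin : Finite (DGroup k r) := Finite.of_surjective fP hfPsurj
  have hcardle : Nat.card (DGroup k r) ≤ (2 * r + 1) * 2 ^ k := by
    calc Nat.card (DGroup k r) ≤ Nat.card (ZMod (2 * r + 1) × ZMod (2 ^ k)) :=
          Nat.card_le_card_of_surjective fP hfPsurj
      _ = (2 * r + 1) * 2 ^ k := by rw [Nat.card_prod, Nat.card_zmod, Nat.card_zmod]
  have hcardDD : Nat.card (DD (2 * r + 1) (2 ^ (k - 1))) = 2 ^ k * (2 * r + 1) := by
    rw [DD.card_DD, h2k]; ring
  have hφbij : Function.Bijective φ :=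
    Function.Surjective.bijective_of_nat_card_le hφsurj
      (by rw [hcardDD]; exact hcardle.trans (le_of_eq (by ring)))
  have hcardP : Nat.card (DGroup k r) = 2 ^ k * (2 * r + 1) := by
    rw [Nat.card_congr (Equiv.ofBijective φ hφbij), hcardDD]
  let e : DGroup k r ≃* DD (2 * r + 1) (2 ^ (k - 1)) := MulEquiv.ofBijective φ hφbij
  have hconjequiv : ConjClasses (DGroup k r) ≃ ConjClasses (DD (2 * r + 1) (2 ^ (k - 1))) :=
    Quotient.congr e.toEquiv (fun a b =>
      ⟨fun h => e.toMonoidHom.map_isConj h,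
       fun h => by
         have h' : IsConj (e a) (e b) := h
         have h2 := e.symm.toMonoidHom.map_isConj h'
         simp only [MulEquiv.coe_toMonoidHom, MulEquiv.symm_apply_apply] at h2
         exact h2⟩)
  refine ⟨hfin, hcardP, ?_⟩
  rw [Nat.card_congr hconjequiv, DihedralAux.card_conjClasses_DD]
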